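/- arXiv:1111.2773 — 11 statements merged into one kernel-verified Lean document; each statement's English description precedes it below -/
import Mathlib

section
/- Let X be the vector field of the Lotka-Volterra system ẋ = x(1+ax+by+cz), ẏ = y(-1+dx+ey+fz), ż = z(1+gx+hy+kz) with e ≠ 0 and parameters satisfying ab-de=0, ac-2ak+gk=0, ae+ah-de-eg=0, af+ak-dk-gk=0, bd+bg-de-dh=0, bf-ch-fh+hk=0, bk-ce+ek-hk=0, cd+cg-2dk+fg-gk=0, ef-hk=0. Then the plane ℓ = 1+ax-ey+kz = 0 is invariant: X(ℓ) = (ax+ey+kz)·ℓ. -/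
/-- Case 1 of the (1:-1:1)-resonance classification: under the nine integrability
conditions and `e ≠ 0`, the plane `ℓ = 1 + a x - e y + k z = 0` is invariant for the
Lotka-Volterra vector field with cofactor `a x + e y + k z`. -/
theorem stmt0 (a b c d e f g h k : ℝ) (he : e ≠ 0)
    (h1 : a*b - d*e = 0) (h2 : a*c - 2*a*k + g*k = 0)
    (h3 : a*e + a*h - d*e - e*g = 0) (h4 : a*f + a*k - d*k - g*k = 0)
    (h5 : b*d + b*g - d*e - d*h = 0) (h6 : b*f - c*h - f*h + h*k = 0)
    (h7 : b*k - c*e + e*k - h*k = 0) (h8 : c*d + c*g - 2*d*k + f*g - g*k = 0)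
    (h9 : e*f - h*k = 0) :
    ∀ x y z : ℝ,
      (x*(1 + a*x + b*y + c*z)) * deriv (fun t => 1 + a*t - e*y + k*z) x
        + (y*(-1 + d*x + e*y + f*z)) * deriv (fun t => 1 + a*x - e*t + k*z) y
        + (z*(1 + g*x + h*y + k*z)) * deriv (fun t => 1 + a*x - e*y + k*t) z
      = (a*x + e*y + k*z) * (1 + a*x - e*y + k*z) := by
  intro x y z
  have d1 : deriv (fun t => 1 + a*t - e*y + k*z) x = a := by
    have : HasDerivAt (fun t => 1 + a*t - e*y + k*z) a x := by
      simpa using ((((hasDerivAt_id x).const_mul a).const_add 1).sub_const (e*y)).add_const (k*z)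
    exact this.deriv
  have d2 : deriv (fun t => 1 + a*x - e*t + k*z) y = -e := by
    have : HasDerivAt (fun t => 1 + a*x - e*t + k*z) (-e) y := by
      have := (((hasDerivAt_id y).const_mul e).const_sub (1+a*x)).add_const (k*z)
      simpa using this
    exact this.deriv
  have d3 : deriv (fun t => 1 + a*x - e*y + k*t) z = k := by
    have : HasDerivAt (fun t => 1 + a*x - e*y + k*t) k z := by
      have := ((hasDerivAt_id z).const_mul k).const_add (1 + a*x - e*y)
      simpa using this
    exact this.deriv
  rw [d1, d2, d3]
  linear_combination x*y*h1 + x*z*h2 - y*z*h9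
end

section
/- Let X be the vector field of the Lotka-Volterra system ẋ = x(1+ax+by+cz), ẏ = y(-1+dx+ey+fz), ż = z(1+gx+hy+kz) with e ≠ 0, satisfying the nine conditions ab-de=0, ac-2ak+gk=0, ae+ah-de-eg=0, af+ak-dk-gk=0, bd+bg-de-dh=0, bf-ch-fh+hk=0, bk-ce+ek-hk=0, cd+cg-2dk+fg-gk=0, ef-hk=0. Then on the region where ℓ = 1+ax-ey+kz > 0, the functions φ₁ = x·y·ℓ^(-1-b/e) and φ₂ = y·z·ℓ^(-1-h/e) are first integrals of X, i.e., X(φ₁) = 0 and X(φ₂) = 0. -/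
/-!
The linear function `ℓ = 1 + a x - e y + k z` is a Darboux polynomial of `X` with cofactor
`a x + e y + k z`, just as `x`, `y`, `z` are, with the brackets of the system as cofactors.
For `φ = u v ℓ^α` with `u, v` two of the coordinates, `X(φ) = φ · (K_u + K_v + α K_ℓ)`, and the exponents `-1 - b/e` and `-1 - h/e` are
exactly those that make this cofactor sum vanish.
-/

theorem deriv_mul_rpow {f ℓ : ℝ → ℝ} {f' ℓ' t : ℝ} (α : ℝ) (hf : HasDerivAt f f' t)
    (hℓ : HasDerivAt ℓ ℓ' t) (hpos : 0 < ℓ t) :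
    deriv (fun s => f s * ℓ s ^ α) t = ℓ t ^ (α - 1) * (f' * ℓ t + α * f t * ℓ') := by
  refine (hf.mul (hℓ.rpow_const (Or.inl hpos.ne'))).deriv.trans ?_
  rw [Real.rpow_sub_one hpos.ne']
  field_simp

section LotkaVolterra

variable {a b c d e f g h k : ℝ}

theorem lotkaVolterra_darboux_linear (h1 : a*b - d*e = 0) (h2 : a*c - 2*a*k + g*k = 0)
    (h9 : e*f - h*k = 0) (x y z : ℝ) :
    a * (x*(1 + a*x + b*y + c*z)) - e * (y*(-1 + d*x + e*y + f*z))
      + k * (z*(1 + g*x + h*y + k*z)) = (1 + a*x - e*y + k*z) * (a*x + e*y + k*z) := by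
  linear_combination (x*y) * h1 + (x*z) * h2 - (y*z) * h9

theorem cofactor_sum_eq_zero {p K Kℓ : ℝ} (he : e ≠ 0) (hK : e * K = (e + p) * Kℓ) :
    K + (-1 - p/e) * Kℓ = 0 := by
  field_simp
  linear_combination hK

end LotkaVolterra

theorem stmt1_general (a b c d e f g h k : ℝ) (he : e ≠ 0)
    (h1 : a*b - d*e = 0) (h2 : a*c - 2*a*k + g*k = 0)
    (h3 : a*e + a*h - d*e - e*g = 0)
    (h7 : b*k - c*e + e*k - h*k = 0)
    (h9 : e*f - h*k = 0) :
    ∀ x y z : ℝ, 0 < 1 + a*x - e*y + k*z →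
      ((x*(1 + a*x + b*y + c*z)) *
          deriv (fun t => t * y * (1 + a*t - e*y + k*z) ^ (-1 - b/e)) x
        + (y*(-1 + d*x + e*y + f*z)) *
          deriv (fun t => x * t * (1 + a*x - e*t + k*z) ^ (-1 - b/e)) y
        + (z*(1 + g*x + h*y + k*z)) *
          deriv (fun t => x * y * (1 + a*x - e*y + k*t) ^ (-1 - b/e)) z = 0)
      ∧
      ((x*(1 + a*x + b*y + c*z)) *
          deriv (fun t => y * z * (1 + a*t - e*y + k*z) ^ (-1 - h/e)) x
        + (y*(-1 + d*x + e*y + f*z)) *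
          deriv (fun t => t * z * (1 + a*x - e*t + k*z) ^ (-1 - h/e)) y
        + (z*(1 + g*x + h*y + k*z)) *
          deriv (fun t => y * t * (1 + a*x - e*y + k*t) ^ (-1 - h/e)) z = 0) := by
  intro x y z hpos
  have hℓx : HasDerivAt (fun t => 1 + a*t - e*y + k*z) a x := by
    simpa using (((hasDerivAt_id x).const_mul a).const_add 1).sub_const (e*y) |>.add_const (k*z)
  have hℓy : HasDerivAt (fun t => 1 + a*x - e*t + k*z) (-e) y := by
    simpa using (((hasDerivAt_id y).const_mul e).const_sub (1 + a*x)).add_const (k*z)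
  have hℓz : HasDerivAt (fun t => 1 + a*x - e*y + k*t) k z := by
    simpa using ((hasDerivAt_id z).const_mul k).const_add (1 + a*x - e*y)
  have hX := lotkaVolterra_darboux_linear h1 h2 h9 x y z
  set ℓ := 1 + a*x - e*y + k*z
  constructor
  · rw [deriv_mul_rpow _ (hasDerivAt_mul_const y) hℓx hpos,
      deriv_mul_rpow _ ((hasDerivAt_id' y).const_mul x) hℓy hpos,
      deriv_mul_rpow _ (hasDerivAt_const z (x*y)) hℓz hpos]
    have hK := cofactor_sum_eq_zero (p := b) (K := (a + d)*x + (b + e)*y + (c + f)*z)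
      (Kℓ := a*x + e*y + k*z) he (by linear_combination (-x) * h1 + z * h9 - z * h7)
    linear_combination (ℓ ^ (-1 - b/e - 1) * x * y) * ((-1 - b/e) * hX + ℓ * hK)
  · rw [deriv_mul_rpow _ (hasDerivAt_const x (y*z)) hℓx hpos,
      deriv_mul_rpow _ (hasDerivAt_mul_const z) hℓy hpos,
      deriv_mul_rpow _ ((hasDerivAt_id' z).const_mul y) hℓz hpos]
    have hK := cofactor_sum_eq_zero (p := h) (K := (d + g)*x + (e + h)*y + (f + k)*z)
      (Kℓ := a*x + e*y + k*z) he (by linear_combination (-x) * h3 + z * h9)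
    linear_combination (ℓ ^ (-1 - h/e - 1) * y * z) * ((-1 - h/e) * hX + ℓ * hK)

/-- Case 1 of the (1:-1:1)-resonance classification: under the nine integrability
conditions and `e ≠ 0`, on the region where `ℓ = 1 + a x - e y + k z > 0`, the functions
`φ₁ = x y ℓ^(-1-b/e)` and `φ₂ = y z ℓ^(-1-h/e)` are first integrals. -/
theorem stmt1 (a b c d e f g h k : ℝ) (he : e ≠ 0)
    (h1 : a*b - d*e = 0) (h2 : a*c - 2*a*k + g*k = 0)
    (h3 : a*e + a*h - d*e - e*g = 0) (h4 : a*f + a*k - d*k - g*k = 0)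
    (h5 : b*d + b*g - d*e - d*h = 0) (h6 : b*f - c*h - f*h + h*k = 0)
    (h7 : b*k - c*e + e*k - h*k = 0) (h8 : c*d + c*g - 2*d*k + f*g - g*k = 0)
    (h9 : e*f - h*k = 0) :
    ∀ x y z : ℝ, 0 < 1 + a*x - e*y + k*z →
      ((x*(1 + a*x + b*y + c*z)) *
          deriv (fun t => t * y * (1 + a*t - e*y + k*z) ^ (-1 - b/e)) x
        + (y*(-1 + d*x + e*y + f*z)) *
          deriv (fun t => x * t * (1 + a*x - e*t + k*z) ^ (-1 - b/e)) y
        + (z*(1 + g*x + h*y + k*z)) *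
          deriv (fun t => x * y * (1 + a*x - e*y + k*t) ^ (-1 - b/e)) z = 0)
      ∧
      ((x*(1 + a*x + b*y + c*z)) *
          deriv (fun t => y * z * (1 + a*t - e*y + k*z) ^ (-1 - h/e)) x
        + (y*(-1 + d*x + e*y + f*z)) *
          deriv (fun t => t * z * (1 + a*x - e*t + k*z) ^ (-1 - h/e)) y
        + (z*(1 + g*x + h*y + k*z)) *
          deriv (fun t => y * t * (1 + a*x - e*y + k*t) ^ (-1 - h/e)) z = 0) :=
  stmt1_general a b c d e f g h k he h1 h2 h3 h7 h9
end

section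
/- Consider the system ẋ = x(1+by+cz), ẏ = y(-1+dx), ż = z(1-dx) with parameters b, c, d. Then the functions φ₁ = x·y·exp(-(dx-by+cz)) and φ₂ = y·z are first integrals of this system. -/
/-- Case 1(ii) of the (1:-1:1)-resonance classification: for the system
`ẋ = x(1+by+cz)`, `ẏ = y(-1+dx)`, `ż = z(1-dx)`, the functions
`φ₁ = x y exp(-(dx-by+cz))` and `φ₂ = y z` are first integrals. -/
theorem stmt2 (b c d : ℝ) :
    ∀ x y z : ℝ,
      ((x*(1 + b*y + c*z)) *
          deriv (fun t => t * y * Real.exp (-(d*t - b*y + c*z))) x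
        + (y*(-1 + d*x)) *
          deriv (fun t => x * t * Real.exp (-(d*x - b*t + c*z))) y
        + (z*(1 - d*x)) *
          deriv (fun t => x * y * Real.exp (-(d*x - b*y + c*t))) z = 0)
      ∧
      ((x*(1 + b*y + c*z)) * deriv (fun t => y * z) x
        + (y*(-1 + d*x)) * deriv (fun t => t * z) y
        + (z*(1 - d*x)) * deriv (fun t => y * t) z = 0) := by
  intro x y z
  have h1 : deriv (fun t => t * y * Real.exp (-(d*t - b*y + c*z))) x
      = y * Real.exp (-(d*x - b*y + c*z))
        + x * y * Real.exp (-(d*x - b*y + c*z)) * (-d) := by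
    have e : HasDerivAt (fun t : ℝ => -(d*t - b*y + c*z)) (-d) x := by
      exact ((((hasDerivAt_id x).const_mul d).sub_const (b*y)|>.add_const (c*z)).neg).congr_deriv (by simp)
    have := (((hasDerivAt_id x).mul_const y).mul e.exp)
    rw [show deriv (fun t => t * y * Real.exp (-(d*t - b*y + c*z))) x = _ from this.deriv]
    simp only [id]; ring
  have h2 : deriv (fun t => x * t * Real.exp (-(d*x - b*t + c*z))) y
      = x * Real.exp (-(d*x - b*y + c*z))
        + x * y * Real.exp (-(d*x - b*y + c*z)) * b := by
    have e : HasDerivAt (fun t : ℝ => -(d*x - b*t + c*z)) b y := by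
      exact ((((hasDerivAt_id y).const_mul b).const_sub (d*x)|>.add_const (c*z)).neg).congr_deriv (by simp)
    have := (((hasDerivAt_id y).const_mul x).mul e.exp)
    rw [show deriv (fun t => x * t * Real.exp (-(d*x - b*t + c*z))) y = _ from this.deriv]
    simp only [id]; ring
  have h3 : deriv (fun t => x * y * Real.exp (-(d*x - b*y + c*t))) z
      = x * y * Real.exp (-(d*x - b*y + c*z)) * (-c) := by
    have e : HasDerivAt (fun t : ℝ => -(d*x - b*y + c*t)) (-c) z := by
      exact (((((hasDerivAt_id z).const_mul c).const_add (d*x - b*y))).neg).congr_deriv (by simp)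
    have := (e.exp.const_mul (x * y))
    simpa [mul_comm, mul_assoc, mul_left_comm] using this.deriv
  constructor
  · rw [h1, h2, h3]; ring
  · have h4 : deriv (fun t : ℝ => y * t) z = y := by
      simpa using ((hasDerivAt_id z).const_mul y).deriv
    simp [h4]; ring
end

section
/- Consider the system ẋ = x(2+ax+cz), ẏ = y(-1+dx+fz), ż = z(1+gx+kz), and suppose it admits two analytic first integrals of the form φ₁ = x·y²(1+O(x,y,z)) and φ₂ = y·z(1+O(x,y,z)) near the origin (so the system is integrable). If additionally there is an analytic function ξ = x^α y^β z^γ (1+O(x,y,z)) with X(ξ) = kξ where k = 2α - β + γ ≠ 0, then the system is linearizable: there is an analytic change of coordinates (x,y,z) ↦ (x̃,ỹ,z̃) = (x(1+O),y(1+O),z(1+O)) in which the system becomes ẋ̃ = 2x̃, ỹ̇ = -ỹ, ż̃ = z̃. -/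
/-!
On the open positive octant the functions `φ₁ = x y² m₁`, `φ₂ = y z m₂` and `ξ` are positive
eigenfunctions of the derivation `X` with eigenvalues `0, 0, κ`, so every product
`φ₁ ^ s * φ₂ ^ t * ξ ^ r` is an eigenfunction with eigenvalue `r κ`. The exponent vectors
`(1,2,0)`, `(0,1,1)`, `(α,β,γ)` of their leading monomials have determinant `κ ≠ 0`, so each of
`x`, `y`, `z` times a suitable unit `m₁ ^ s * m₂ ^ t * ξ₀ ^ r` is such a product, with `r κ` equal
to `2`, `-1`, `1` respectively. The resulting eigen-equations hold on the octant, and extend to a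
neighbourhood of the origin by the identity theorem, both sides being analytic there.
-/

open Filter Set Topology

/-- The vector field of the `(2:-1:1)`-resonant Lotka-Volterra system
`ẋ = x(2+ax+cz)`, `ẏ = y(-1+dx+fz)`, `ż = z(1+gx+kz)` applied to a function `φ`. -/
noncomputable def X211 (a c d f g k : ℝ) (φ : ℝ × ℝ × ℝ → ℝ) (p : ℝ × ℝ × ℝ) : ℝ :=
  p.1 * (2 + a * p.1 + c * p.2.2) * fderiv ℝ φ p (1, 0, 0)
    + p.2.1 * (-1 + d * p.1 + f * p.2.2) * fderiv ℝ φ p (0, 1, 0)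
    + p.2.2 * (1 + g * p.1 + k * p.2.2) * fderiv ℝ φ p (0, 0, 1)

theorem AnalyticAt.rpow_const_of_pos {E : Type*} [NormedAddCommGroup E] [NormedSpace ℝ E]
    {h : E → ℝ} {x : E} (hh : AnalyticAt ℝ h x) (hpos : 0 < h x) (r : ℝ) :
    AnalyticAt ℝ (fun q => h q ^ r) x := by
  have hexp : AnalyticAt ℝ (fun q => Real.exp (Real.log (h q) * r)) x := by
    fun_prop (disch := exact hpos)
  refine hexp.congr ?_
  filter_upwards [hh.continuousAt.eventually (lt_mem_nhds hpos)] with q hq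
  rw [Real.rpow_def_of_pos hq]

theorem AnalyticAt.eventually_differentiableAt_and_pos {E : Type*} [NormedAddCommGroup E]
    [NormedSpace ℝ E] {m : E → ℝ} {x : E} (hm : AnalyticAt ℝ m x) (h : 0 < m x) :
    ∀ᶠ p in 𝓝 x, DifferentiableAt ℝ m p ∧ 0 < m p :=
  (hm.eventually_analyticAt.mono fun _ hp => hp.differentiableAt).and
    (hm.continuousAt.eventually (lt_mem_nhds h))

theorem AnalyticAt.eventually_eq_zero_of_nhdsWithin {E F : Type*} [NormedAddCommGroup E]
    [NormedSpace ℝ E] [NormedAddCommGroup F] [NormedSpace ℝ F] [CompleteSpace F]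
    {f : E → F} {x : E} {s : Set E} (hf : AnalyticAt ℝ f x) (hs : IsOpen s)
    (hx : x ∈ closure s) (h : ∀ᶠ y in 𝓝[s] x, f y = 0) : ∀ᶠ y in 𝓝 x, f y = 0 := by
  obtain ⟨r, hr, hball⟩ := Metric.eventually_nhds_iff_ball.mp
    (hf.eventually_analyticAt.and (eventually_nhdsWithin_iff.mp h))
  obtain ⟨y, hyr, hys⟩ := mem_closure_iff_nhds.mp hx _ (Metric.ball_mem_nhds x hr)
  have hy : f =ᶠ[𝓝 y] 0 := by
    filter_upwards [(Metric.isOpen_ball.inter hs).mem_nhds ⟨hyr, hys⟩] with z hz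
    exact (hball z hz.1).2 hz.2
  have hzero := AnalyticOnNhd.eqOn_zero_of_preconnected_of_eventuallyEq_zero
    (fun z hz => (hball z hz).1) (convex_ball x r).isPreconnected hyr hy
  filter_upwards [Metric.ball_mem_nhds x hr] with z hz using hzero hz

theorem monomial_mul_rpow_eq_prod_rpow {x y z A B C α β γ s t r : ℝ} (hx : 0 < x) (hy : 0 < y)
    (hz : 0 < z) (hA : 0 < A) (hB : 0 < B) (hC : 0 < C) :
    x ^ (s + r * α) * y ^ (2 * s + t + r * β) * z ^ (t + r * γ) * (A ^ s * B ^ t * C ^ r)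
      = (x * y ^ 2 * A) ^ s * (y * z * B) ^ t * (x ^ α * y ^ β * z ^ γ * C) ^ r := by
  simp (disch := positivity) only [Real.mul_rpow, Real.rpow_add, ← Real.rpow_mul,
    ← Real.rpow_natCast_mul]
  push_cast
  ring_nf

def posOctant : Set (ℝ × ℝ × ℝ) := {q | 0 < q.1 ∧ 0 < q.2.1 ∧ 0 < q.2.2}

theorem isOpen_posOctant : IsOpen posOctant :=
  isOpen_Ioi.prod (isOpen_Ioi.prod isOpen_Ioi)

theorem zero_mem_closure_posOctant : (0 : ℝ × ℝ × ℝ) ∈ closure posOctant := by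
  change (0 : ℝ × ℝ × ℝ) ∈ closure (Ioi 0 ×ˢ Ioi 0 ×ˢ Ioi 0)
  simp only [closure_prod_eq, closure_Ioi]
  exact ⟨le_refl (0:ℝ), le_refl (0:ℝ), le_refl (0:ℝ)⟩

section X211
variable {a c d f g k : ℝ} {φ ψ : ℝ × ℝ × ℝ → ℝ} {p : ℝ × ℝ × ℝ}

theorem X211_congr (h : φ =ᶠ[𝓝 p] ψ) : X211 a c d f g k φ p = X211 a c d f g k ψ p := by
  simp only [X211, h.fderiv_eq]

theorem X211_mul (hφ : DifferentiableAt ℝ φ p) (hψ : DifferentiableAt ℝ ψ p) :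
    X211 a c d f g k (fun q => φ q * ψ q) p
      = X211 a c d f g k φ p * ψ p + φ p * X211 a c d f g k ψ p := by
  simp only [X211, fderiv_fun_mul hφ hψ, add_apply, smul_apply, smul_eq_mul]
  ring

theorem X211_rpow_const (hφ : DifferentiableAt ℝ φ p) (hpos : 0 < φ p) (r : ℝ) :
    X211 a c d f g k (fun q => φ q ^ r) p = r * φ p ^ (r - 1) * X211 a c d f g k φ p := by
  simp only [X211, (hφ.hasFDerivAt.rpow_const (Or.inl hpos.ne')).fderiv,
    smul_apply, smul_eq_mul]
  ring

theorem analyticAt_X211 (hφ : AnalyticAt ℝ φ p) : AnalyticAt ℝ (X211 a c d f g k φ) p := by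
  have hD (v : ℝ × ℝ × ℝ) : AnalyticAt ℝ (fun q => fderiv ℝ φ q v) p :=
    ((ContinuousLinearMap.apply ℝ ℝ v).analyticAt _).comp hφ.fderiv
  have h1 : AnalyticAt ℝ (fun q : ℝ × ℝ × ℝ => q.1) p := analyticAt_fst
  have h2 : AnalyticAt ℝ (fun q : ℝ × ℝ × ℝ => q.2.1) p := analyticAt_fst.comp analyticAt_snd
  have h3 : AnalyticAt ℝ (fun q : ℝ × ℝ × ℝ => q.2.2) p := analyticAt_snd.comp analyticAt_snd
  unfold X211
  fun_prop

theorem X211_rpow_const_of_eq_mul {ℓ : ℝ} (hφ : DifferentiableAt ℝ φ p) (hpos : 0 < φ p)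
    (h : X211 a c d f g k φ p = ℓ * φ p) (r : ℝ) :
    X211 a c d f g k (fun q => φ q ^ r) p = r * ℓ * φ p ^ r := by
  rw [X211_rpow_const hφ hpos, h, Real.rpow_sub_one hpos.ne']
  field_simp

theorem X211_mul_of_eq_mul {ℓ ℓ' : ℝ} (hφ : DifferentiableAt ℝ φ p) (hψ : DifferentiableAt ℝ ψ p)
    (h : X211 a c d f g k φ p = ℓ * φ p) (h' : X211 a c d f g k ψ p = ℓ' * ψ p) :
    X211 a c d f g k (fun q => φ q * ψ q) p = (ℓ + ℓ') * (φ p * ψ p) := by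
  rw [X211_mul hφ hψ, h, h']
  ring

end X211

section X211Eventually
variable {a c d f g k : ℝ} {S : Set (ℝ × ℝ × ℝ)} {x₀ : ℝ × ℝ × ℝ}

theorem eventually_X211_eq_mul_of_eq_rpow_mul (hS : IsOpen S) {Φ₁ Φ₂ Φ₃ Ψ : ℝ × ℝ × ℝ → ℝ}
    {ℓ₁ ℓ₂ ℓ₃ s t r : ℝ}
    (h₁ : ∀ᶠ p in 𝓝[S] x₀, DifferentiableAt ℝ Φ₁ p ∧ 0 < Φ₁ p ∧ X211 a c d f g k Φ₁ p = ℓ₁ * Φ₁ p)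
    (h₂ : ∀ᶠ p in 𝓝[S] x₀, DifferentiableAt ℝ Φ₂ p ∧ 0 < Φ₂ p ∧ X211 a c d f g k Φ₂ p = ℓ₂ * Φ₂ p)
    (h₃ : ∀ᶠ p in 𝓝[S] x₀, DifferentiableAt ℝ Φ₃ p ∧ 0 < Φ₃ p ∧ X211 a c d f g k Φ₃ p = ℓ₃ * Φ₃ p)
    (hΨ : ∀ᶠ q in 𝓝[S] x₀, Ψ q = Φ₁ q ^ s * Φ₂ q ^ t * Φ₃ q ^ r) :
    ∀ᶠ p in 𝓝[S] x₀, X211 a c d f g k Ψ p = (s * ℓ₁ + t * ℓ₂ + r * ℓ₃) * Ψ p := by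
  filter_upwards [h₁, h₂, h₃, eventually_eventually_nhdsWithin.mpr hΨ, self_mem_nhdsWithin]
    with p ⟨d₁, pos₁, e₁⟩ ⟨d₂, pos₂, e₂⟩ ⟨d₃, pos₃, e₃⟩ hΨp hpS
  rw [X211_congr (hS.nhdsWithin_eq hpS ▸ hΨp), hΨp.self_of_nhdsWithin hpS]
  have dpow {Φ : ℝ × ℝ × ℝ → ℝ} (hd : DifferentiableAt ℝ Φ p) (hpos : 0 < Φ p) (e : ℝ) :
      DifferentiableAt ℝ (fun q => Φ q ^ e) p :=
    hd.rpow_const (Or.inl hpos.ne')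
  exact X211_mul_of_eq_mul ((dpow d₁ pos₁ s).mul (dpow d₂ pos₂ t)) (dpow d₃ pos₃ r)
    (X211_mul_of_eq_mul (dpow d₁ pos₁ s) (dpow d₂ pos₂ t)
      (X211_rpow_const_of_eq_mul d₁ pos₁ e₁ s) (X211_rpow_const_of_eq_mul d₂ pos₂ e₂ t))
    (X211_rpow_const_of_eq_mul d₃ pos₃ e₃ r)

theorem eventually_X211_eq_mul_of_nhdsWithin (hS : IsOpen S) (hx₀ : x₀ ∈ closure S)
    {Ψ : ℝ × ℝ × ℝ → ℝ} {ℓ : ℝ} (hΨ : AnalyticAt ℝ Ψ x₀)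
    (h : ∀ᶠ p in 𝓝[S] x₀, X211 a c d f g k Ψ p = ℓ * Ψ p) :
    ∀ᶠ p in 𝓝 x₀, X211 a c d f g k Ψ p = ℓ * Ψ p :=
  (((analyticAt_X211 hΨ).sub (analyticAt_const.mul hΨ)).eventually_eq_zero_of_nhdsWithin hS hx₀
    (h.mono fun _ hp => sub_eq_zero.mpr hp)).mono fun _ hp => sub_eq_zero.mp hp

end X211Eventually

theorem eventually_X211_mul_rpow_eq_mul {a c d f g k α β γ κ : ℝ} {m₁ m₂ ξ₀ μ : ℝ × ℝ × ℝ → ℝ}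
    (hm₁ : AnalyticAt ℝ m₁ 0) (hm₁0 : 0 < m₁ 0)
    (hm₂ : AnalyticAt ℝ m₂ 0) (hm₂0 : 0 < m₂ 0)
    (hξ₀ : AnalyticAt ℝ ξ₀ 0) (hξ₀0 : 0 < ξ₀ 0)
    (hφ₁ : ∀ᶠ p in 𝓝 0, X211 a c d f g k (fun q => q.1 * q.2.1 ^ 2 * m₁ q) p = 0)
    (hφ₂ : ∀ᶠ p in 𝓝 0, X211 a c d f g k (fun q => q.2.1 * q.2.2 * m₂ q) p = 0)
    (hξ : ∀ᶠ p in 𝓝[posOctant] 0,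
      X211 a c d f g k (fun q => q.1 ^ α * q.2.1 ^ β * q.2.2 ^ γ * ξ₀ q) p
        = κ * (p.1 ^ α * p.2.1 ^ β * p.2.2 ^ γ * ξ₀ p))
    {s t r i j l ℓ : ℝ} (hi : s + r * α = i) (hj : 2 * s + t + r * β = j) (hl : t + r * γ = l)
    (hℓ : r * κ = ℓ) (hμ : AnalyticAt ℝ μ 0)
    (hμ_eq : ∀ q ∈ posOctant, μ q = q.1 ^ i * q.2.1 ^ j * q.2.2 ^ l) :
    ∀ᶠ p in 𝓝 0, X211 a c d f g k (fun q => μ q * (m₁ q ^ s * m₂ q ^ t * ξ₀ q ^ r)) p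
      = ℓ * (μ p * (m₁ p ^ s * m₂ p ^ t * ξ₀ p ^ r)) := by
  have pos₁ := nhdsWithin_le_nhds (s := posOctant) (hm₁.eventually_differentiableAt_and_pos hm₁0)
  have pos₂ := nhdsWithin_le_nhds (s := posOctant) (hm₂.eventually_differentiableAt_and_pos hm₂0)
  have pos₃ := nhdsWithin_le_nhds (s := posOctant) (hξ₀.eventually_differentiableAt_and_pos hξ₀0)
  have hΦ₁ : ∀ᶠ p in 𝓝[posOctant] 0,
      DifferentiableAt ℝ (fun q => q.1 * q.2.1 ^ 2 * m₁ q) p ∧ 0 < p.1 * p.2.1 ^ 2 * m₁ p ∧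
        X211 a c d f g k (fun q => q.1 * q.2.1 ^ 2 * m₁ q) p = 0 * (p.1 * p.2.1 ^ 2 * m₁ p) := by
    filter_upwards [self_mem_nhdsWithin, pos₁, nhdsWithin_le_nhds hφ₁]
      with p ⟨hx, hy, _⟩ ⟨hd, hpos⟩ h
    exact ⟨by fun_prop, by positivity, by rw [h, zero_mul]⟩
  have hΦ₂ : ∀ᶠ p in 𝓝[posOctant] 0,
      DifferentiableAt ℝ (fun q => q.2.1 * q.2.2 * m₂ q) p ∧ 0 < p.2.1 * p.2.2 * m₂ p ∧
        X211 a c d f g k (fun q => q.2.1 * q.2.2 * m₂ q) p = 0 * (p.2.1 * p.2.2 * m₂ p) := by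
    filter_upwards [self_mem_nhdsWithin, pos₂, nhdsWithin_le_nhds hφ₂]
      with p ⟨_, hy, hz⟩ ⟨hd, hpos⟩ h
    exact ⟨by fun_prop, by positivity, by rw [h, zero_mul]⟩
  have hΦ₃ : ∀ᶠ p in 𝓝[posOctant] 0,
      DifferentiableAt ℝ (fun q => q.1 ^ α * q.2.1 ^ β * q.2.2 ^ γ * ξ₀ q) p ∧
        0 < p.1 ^ α * p.2.1 ^ β * p.2.2 ^ γ * ξ₀ p ∧
        X211 a c d f g k (fun q => q.1 ^ α * q.2.1 ^ β * q.2.2 ^ γ * ξ₀ q) p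
          = κ * (p.1 ^ α * p.2.1 ^ β * p.2.2 ^ γ * ξ₀ p) := by
    filter_upwards [self_mem_nhdsWithin, pos₃, hξ] with p ⟨hx, hy, hz⟩ ⟨hd, hpos⟩ h
    refine ⟨?_, by positivity, h⟩
    exact (((differentiableAt_fst.rpow_const (Or.inl hx.ne')).mul
      ((differentiableAt_fst.comp p differentiableAt_snd).rpow_const (Or.inl hy.ne'))).mul
      ((differentiableAt_snd.comp p differentiableAt_snd).rpow_const (Or.inl hz.ne'))).mul hd
  have hΨ : ∀ᶠ q in 𝓝[posOctant] 0, μ q * (m₁ q ^ s * m₂ q ^ t * ξ₀ q ^ r)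
      = (q.1 * q.2.1 ^ 2 * m₁ q) ^ s * (q.2.1 * q.2.2 * m₂ q) ^ t
        * (q.1 ^ α * q.2.1 ^ β * q.2.2 ^ γ * ξ₀ q) ^ r := by
    filter_upwards [self_mem_nhdsWithin, pos₁, pos₂, pos₃] with q hq h₁ h₂ h₃
    rw [hμ_eq q hq, ← hi, ← hj, ← hl]
    exact monomial_mul_rpow_eq_prod_rpow hq.1 hq.2.1 hq.2.2 h₁.2 h₂.2 h₃.2
  refine eventually_X211_eq_mul_of_nhdsWithin isOpen_posOctant zero_mem_closure_posOctant
    (hμ.mul (((hm₁.rpow_const_of_pos hm₁0 s).mul (hm₂.rpow_const_of_pos hm₂0 t)).mul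
      (hξ₀.rpow_const_of_pos hξ₀0 r))) ?_
  simpa [hℓ] using eventually_X211_eq_mul_of_eq_rpow_mul isOpen_posOctant hΦ₁ hΦ₂ hΦ₃ hΨ

/-- If the system `ẋ = x(2+ax+cz)`, `ẏ = y(-1+dx+fz)`, `ż = z(1+gx+kz)` has two analytic
first integrals `φ₁ = x y² (1+O(x,y,z))` and `φ₂ = y z (1+O(x,y,z))`, and a function
`ξ = x^α y^β z^γ (1+O(x,y,z))` with `X(ξ) = κ ξ`, `κ = 2α-β+γ ≠ 0`, then the system is
linearizable. -/
theorem stmt7 (a c d f g k α β γ κ : ℝ) (hκ : κ = 2*α - β + γ) (hκ0 : κ ≠ 0)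
    (m₁ m₂ ξ₀ : ℝ × ℝ × ℝ → ℝ)
    (hm₁ : AnalyticAt ℝ m₁ 0) (hm₁0 : m₁ 0 = 1)
    (hm₂ : AnalyticAt ℝ m₂ 0) (hm₂0 : m₂ 0 = 1)
    (hξ₀ : AnalyticAt ℝ ξ₀ 0) (hξ₀0 : ξ₀ 0 = 1)
    (hφ₁ : ∀ᶠ p in nhds (0 : ℝ × ℝ × ℝ),
      X211 a c d f g k (fun q => q.1 * q.2.1 ^ 2 * m₁ q) p = 0)
    (hφ₂ : ∀ᶠ p in nhds (0 : ℝ × ℝ × ℝ),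
      X211 a c d f g k (fun q => q.2.1 * q.2.2 * m₂ q) p = 0)
    (hξ : ∀ᶠ p in nhdsWithin (0 : ℝ × ℝ × ℝ)
        {q : ℝ × ℝ × ℝ | 0 < q.1 ∧ 0 < q.2.1 ∧ 0 < q.2.2},
      X211 a c d f g k (fun q => q.1 ^ α * q.2.1 ^ β * q.2.2 ^ γ * ξ₀ q) p
        = κ * (p.1 ^ α * p.2.1 ^ β * p.2.2 ^ γ * ξ₀ p)) :
    ∃ u v w : ℝ × ℝ × ℝ → ℝ,
      AnalyticAt ℝ u 0 ∧ u 0 = 1 ∧ AnalyticAt ℝ v 0 ∧ v 0 = 1 ∧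
      AnalyticAt ℝ w 0 ∧ w 0 = 1 ∧
      ∀ᶠ p in nhds (0 : ℝ × ℝ × ℝ),
        X211 a c d f g k (fun q => q.1 * u q) p = 2 * (p.1 * u p) ∧
        X211 a c d f g k (fun q => q.2.1 * v q) p = -(p.2.1 * v p) ∧
        X211 a c d f g k (fun q => q.2.2 * w q) p = p.2.2 * w p := by
  have h₁ : 0 < m₁ 0 := hm₁0 ▸ one_pos
  have h₂ : 0 < m₂ 0 := hm₂0 ▸ one_pos
  have h₃ : 0 < ξ₀ 0 := hξ₀0 ▸ one_pos
  have hunit (s t r : ℝ) : AnalyticAt ℝ (fun q => m₁ q ^ s * m₂ q ^ t * ξ₀ q ^ r) 0 ∧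
      m₁ 0 ^ s * m₂ 0 ^ t * ξ₀ 0 ^ r = 1 :=
    ⟨((hm₁.rpow_const_of_pos h₁ s).mul (hm₂.rpow_const_of_pos h₂ t)).mul
      (hξ₀.rpow_const_of_pos h₃ r), by simp [hm₁0, hm₂0, hξ₀0]⟩
  -- `(s, t, r)` solves `s (1,2,0) + t (0,1,1) + r (α,β,γ) = eᵢ` by Cramer's rule
  obtain ⟨hu, hu0⟩ := hunit ((γ - β) / κ) (-2 * γ / κ) (2 / κ)
  obtain ⟨hv, hv0⟩ := hunit (α / κ) (γ / κ) (-1 / κ)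
  obtain ⟨hw, hw0⟩ := hunit (-α / κ) (1 - γ / κ) (1 / κ)
  refine ⟨_, _, _, hu, hu0, hv, hv0, hw, hw0, ?_⟩
  filter_upwards [
    eventually_X211_mul_rpow_eq_mul hm₁ h₁ hm₂ h₂ hξ₀ h₃ hφ₁ hφ₂ hξ (μ := fun q => q.1)
      (s := (γ - β) / κ) (t := -2 * γ / κ) (r := 2 / κ) (i := 1) (j := 0) (l := 0) (ℓ := 2)
      (by field_simp; linarith) (by field_simp; linarith) (by field_simp; linarith)
      (by field_simp) analyticAt_fst (by simp),
    eventually_X211_mul_rpow_eq_mul hm₁ h₁ hm₂ h₂ hξ₀ h₃ hφ₁ hφ₂ hξ (μ := fun q => q.2.1)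
      (s := α / κ) (t := γ / κ) (r := -1 / κ) (i := 0) (j := 1) (l := 0) (ℓ := -1)
      (by field_simp; linarith) (by field_simp; linarith) (by field_simp; linarith)
      (by field_simp) (analyticAt_fst.comp analyticAt_snd) (by simp),
    eventually_X211_mul_rpow_eq_mul hm₁ h₁ hm₂ h₂ hξ₀ h₃ hφ₁ hφ₂ hξ (μ := fun q => q.2.2)
      (s := -α / κ) (t := 1 - γ / κ) (r := 1 / κ) (i := 0) (j := 0) (l := 1) (ℓ := 1)
      (by field_simp; linarith) (by field_simp; linarith) (by field_simp; linarith)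
      (by field_simp) (analyticAt_snd.comp analyticAt_snd) (by simp)]
    with p hx hy hz
  exact ⟨hx, by rw [hy, neg_one_mul], by rw [hz, one_mul]⟩
end

section
/- Let X be the vector field of the system ẋ = x(2+ax), ẏ = y(-1+dx+hy+kz), ż = z(1+gx+hy+kz) (the case b=c'=0, e=h, f=k of the (2:-1:1)-resonance). For this system with a ≠ 0, the function M = x^{5/2}·y³·(1+ax/2)^{-1/2-2d/a+g/a} is an inverse Jacobi multiplier: X(M) = M·div(X), where div(X) = ∂/∂x[x(2+ax)] + ∂/∂y[y(-1+dx+hy+kz)] + ∂/∂z[z(1+gx+hy+kz)]. -/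
/-- Case 7 of the `(2:-1:1)`-resonance analysis: for the system `ẋ = x(2+ax)`,
`ẏ = y(-1+dx+hy+kz)`, `ż = z(1+gx+hy+kz)` with `a ≠ 0`, the function
`M = x^{5/2} y³ (1+ax/2)^{-1/2-2d/a+g/a}` is an inverse Jacobi multiplier on the
region `x > 0`, `1 + ax/2 > 0`. -/
theorem stmt8 (a d g h k : ℝ) (ha : a ≠ 0) :
    ∀ x y z : ℝ, 0 < x → 0 < 1 + a*x/2 →
      (x*(2 + a*x)) *
          deriv (fun t => t ^ ((5:ℝ)/2) * y^3 * (1 + a*t/2) ^ (-1/2 - 2*d/a + g/a)) x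
        + (y*(-1 + d*x + h*y + k*z)) *
          deriv (fun t => x ^ ((5:ℝ)/2) * t^3 * (1 + a*x/2) ^ (-1/2 - 2*d/a + g/a)) y
        + (z*(1 + g*x + h*y + k*z)) *
          deriv (fun t => x ^ ((5:ℝ)/2) * y^3 * (1 + a*x/2) ^ (-1/2 - 2*d/a + g/a)) z
      = (x ^ ((5:ℝ)/2) * y^3 * (1 + a*x/2) ^ (-1/2 - 2*d/a + g/a)) *
          (deriv (fun t => t*(2 + a*t)) x
            + deriv (fun t => t*(-1 + d*x + h*t + k*z)) y
            + deriv (fun t => t*(1 + g*x + h*y + k*t)) z) := by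
  intro x y z hx hu
  obtain ⟨e, he⟩ : ∃ e : ℝ, e = -1/2 - 2*d/a + g/a := ⟨_, rfl⟩
  rw [show (-1/2 - 2*d/a + g/a : ℝ) = e from he.symm]
  -- derivative in x
  have hin : HasDerivAt (fun t : ℝ => 1 + a*t/2) (a/2) x := by
    have := (((hasDerivAt_id x).const_mul a).div_const 2).const_add 1
    simpa using this
  have hpow : HasDerivAt (fun t : ℝ => (1 + a*t/2) ^ e)
      (e * (1 + a*x/2) ^ (e-1) * (a/2)) x := by
    have hp : HasDerivAt (fun s : ℝ => s ^ e) (e * (1 + a*x/2) ^ (e-1)) (1 + a*x/2) :=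
      Real.hasDerivAt_rpow_const (Or.inl hu.ne')
    exact hp.comp x hin
  have h1 : HasDerivAt (fun t : ℝ => t ^ ((5:ℝ)/2) * y^3 * (1 + a*t/2) ^ e)
      ((5/2 * x ^ ((5:ℝ)/2 - 1)) * y^3 * (1 + a*x/2) ^ e
        + x ^ ((5:ℝ)/2) * y^3 * (e * (1 + a*x/2) ^ (e-1) * (a/2))) x := by
    exact ((Real.hasDerivAt_rpow_const (p := (5:ℝ)/2) (Or.inl hx.ne')).mul_const (y^3)).mul hpow
  have h2 : HasDerivAt (fun t : ℝ => x ^ ((5:ℝ)/2) * t^3 * (1 + a*x/2) ^ e)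
      ((x ^ ((5:ℝ)/2) * (3 * y^2)) * (1 + a*x/2) ^ e) y := by
    have := (((hasDerivAt_pow 3 y).const_mul (x ^ ((5:ℝ)/2))).mul_const ((1 + a*x/2) ^ e))
    simpa using this
  have h3 : deriv (fun _ : ℝ => x ^ ((5:ℝ)/2) * y^3 * (1 + a*x/2) ^ e) z = 0 :=
    deriv_const _ _
  have hd1 : HasDerivAt (fun t : ℝ => t*(2 + a*t)) (1*(2 + a*x) + x*(a*1)) x :=
    by
    have h := (hasDerivAt_id x).mul ((hasDerivAt_const x 2).add ((hasDerivAt_id x).const_mul a))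
    simp only [id_eq, Pi.add_apply] at h
    exact h.congr_deriv (by ring)
  have hd2 : HasDerivAt (fun t : ℝ => t*(-1 + d*x + h*t + k*z))
      (1*(-1 + d*x + h*y + k*z) + y*(h*1)) y :=
    (hasDerivAt_id y).mul ((((hasDerivAt_const y (-1 + d*x)).add
      ((hasDerivAt_id y).const_mul h)).add (hasDerivAt_const y (k*z))).congr_deriv (by ring))
  have hd3 : HasDerivAt (fun t : ℝ => t*(1 + g*x + h*y + k*t))
      (1*(1 + g*x + h*y + k*z) + z*(k*1)) z :=
    (hasDerivAt_id z).mul ((((hasDerivAt_const z (1 + g*x + h*y)).add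
      ((hasDerivAt_id z).const_mul k)).congr_deriv (by ring)))
  rw [h1.deriv, h2.deriv, h3, hd1.deriv, hd2.deriv, hd3.deriv]
  have hX : x ^ ((5:ℝ)/2) = x ^ ((5:ℝ)/2 - 1) * x := by
    rw [← Real.rpow_add_one hx.ne']; norm_num
  have hU : (1 + a*x/2) ^ e = (1 + a*x/2) ^ (e-1) * (1 + a*x/2) := by
    rw [← Real.rpow_add_one hu.ne']; ring_nf
  have hae : a * e = -a/2 - 2*d + g := by rw [he]; field_simp
  set X2 := x ^ ((5:ℝ)/2 - 1)
  set U1 := (1 + a*x/2) ^ (e-1)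
  rw [hX, hU]
  linear_combination (X2 * x^2 * y^3 * U1 + x^3 * X2 * y^3 * U1 * (a/2)) * hae
end

section
/- Let ℓ, χ be formal power series in one variable X with ℓ(0)=1, satisfying 2X χ' - χ = e·ℓ with e ≠ 0. Then for every positive integer m, the coefficient of X^m in ℓ·χ^{2m-1} is zero. -/
open PowerSeries

/-!
Multiplying `2Xχ' - χ` by `m χ^{2m-1}` gives `X (χ^{2m})' - m χ^{2m}`. Since `X d/dX` acts on `X^m`
as multiplication by `m`, this series has no `X^m` term, so neither has `e ℓ χ^{2m-1}`.
-/

namespace PowerSeries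

variable {R : Type*}

theorem coeff_X_mul_derivative [CommSemiring R] (f : R⟦X⟧) (n : ℕ) :
    coeff n (X * d⁄dX R f) = n * coeff n f := by
  cases n with
  | zero => simp
  | succ n => rw [coeff_succ_X_mul, coeff_derivative]; push_cast; ring

theorem nsmul_two_X_mul_derivative_sub_mul_pow [CommRing R] (χ : R⟦X⟧) {m : ℕ} (hm : 0 < m) :
    m • ((2 • (X * d⁄dX R χ) - χ) * χ ^ (2 * m - 1))
      = X * d⁄dX R (χ ^ (2 * m)) - m • χ ^ (2 * m) := by
  obtain ⟨k, rfl⟩ : ∃ k, m = k + 1 := ⟨m - 1, by omega⟩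
  rw [derivative_pow, show 2 * (k + 1) - 1 = 2 * k + 1 by omega,
    show 2 * (k + 1) = 2 * k + 1 + 1 by omega]
  simp only [nsmul_eq_mul]
  push_cast
  ring

theorem coeff_two_X_mul_derivative_sub_mul_pow [CommRing R] [IsAddTorsionFree R] (χ : R⟦X⟧)
    {m : ℕ} (hm : 0 < m) :
    coeff m ((2 • (X * d⁄dX R χ) - χ) * χ ^ (2 * m - 1)) = 0 := by
  rw [← nsmul_eq_zero_iff_right hm.ne', ← map_nsmul, nsmul_two_X_mul_derivative_sub_mul_pow χ hm,
    map_sub, coeff_X_mul_derivative, map_nsmul, nsmul_eq_mul, sub_self]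

end PowerSeries

theorem stmt11_general (e : ℝ) (he : e ≠ 0) (ℓ χ : PowerSeries ℝ)
    (heq : 2 • (PowerSeries.X * χ.derivativeFun) - χ = PowerSeries.C e * ℓ) :
    ∀ m : ℕ, 0 < m → coeff m (ℓ * χ ^ (2 * m - 1)) = 0 := by
  intro m hm
  have h := coeff_two_X_mul_derivative_sub_mul_pow χ hm
  set_option linter.deprecated false in
  rw [show d⁄dX ℝ χ = χ.derivativeFun from rfl, heq, mul_assoc, coeff_C_mul] at h
  exact (mul_eq_zero.mp h).resolve_left he

/-- Key combinatorial lemma of Case 10 of the `(2:-1:1)` analysis: if the formal power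
series `ℓ, χ` satisfy `2X χ' - χ = e ℓ` with `ℓ(0) = 1` and `e ≠ 0`, then for every
`m ≥ 1` the coefficient of `X^m` in `ℓ χ^{2m-1}` vanishes. -/
theorem stmt11 (e : ℝ) (he : e ≠ 0) (ℓ χ : PowerSeries ℝ)
    (hℓ : constantCoeff ℓ = 1)
    (heq : 2 • (PowerSeries.X * χ.derivativeFun) - χ = PowerSeries.C e * ℓ) :
    ∀ m : ℕ, 0 < m → coeff m (ℓ * χ ^ (2 * m - 1)) = 0 :=
  stmt11_general e he ℓ χ heq
end

section
/- Consider the system ẋ = x(1+ax+by+cz), ẏ = y(-2+dx+ey+fz), ż = z(1+gx+hy+kz) with the parameters b+h=0, c+k=0, d=0, e=h, f=k, g=0 (Case 8 of the (1:-2:1) classification: ẋ = x(1+ax-hy-kz), ẏ = y(-2+hy+kz), ż = z(1+hy+kz)). Then the surfaces ℓ₁ = 1+(b/2)y-cz and ℓ₂ = 1+ax+abxy-(ac/2)xz satisfy X(ℓ₁)=(-by-cz)ℓ₁ and X(ℓ₂)=ax·ℓ₂, and consequently φ₁ = x²y·ℓ₁·ℓ₂^{-2} and φ₂ = yz²·ℓ₁^{-3}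 are first integrals of X. -/
lemma hd_affine (c0 c1 t : ℝ) : HasDerivAt (fun s => c0 + c1*s) c1 t := by
  simpa using ((hasDerivAt_id t).const_mul c1).const_add c0

lemma deriv_affine (c0 c1 x : ℝ) : deriv (fun t => c0 + c1*t) x = c1 :=
  (hd_affine c0 c1 x).deriv

lemma hd_quad (n0 n1 n2 t : ℝ) :
    HasDerivAt (fun s => n0 + n1*s + n2*s^2) (n1 + 2*n2*t) t := by
  have := (hd_affine n0 n1 t).add ((hasDerivAt_pow 2 t).const_mul n2)
  exact this.congr_deriv (by push_cast; ring)

lemma deriv_quad_div_sq (n0 n1 n2 d0 d1 x : ℝ) (hd : d0 + d1*x ≠ 0) :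
    deriv (fun t => (n0 + n1*t + n2*t^2) / (d0 + d1*t)^2) x
      = ((n1 + 2*n2*x)*(d0+d1*x)^2 - (n0+n1*x+n2*x^2)*(2*(d0+d1*x)*d1)) / ((d0+d1*x)^2)^2 := by
  have hq := (hd_affine d0 d1 x).pow 2
  have := ((hd_quad n0 n1 n2 x).div hq (pow_ne_zero 2 hd)).deriv
  rw [show (fun t => (n0 + n1*t + n2*t^2) / (d0 + d1*t)^2) = (fun s => n0 + n1*s + n2*s^2) / (fun s => d0 + d1*s)^2 from rfl,
    this]; simp only [Pi.pow_apply]; push_cast; ring_nf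

lemma deriv_quad_div_cube (n0 n1 n2 d0 d1 x : ℝ) (hd : d0 + d1*x ≠ 0) :
    deriv (fun t => (n0 + n1*t + n2*t^2) / (d0 + d1*t)^3) x
      = ((n1 + 2*n2*x)*(d0+d1*x)^3 - (n0+n1*x+n2*x^2)*(3*(d0+d1*x)^2*d1)) / ((d0+d1*x)^3)^2 := by
  have hq := (hd_affine d0 d1 x).pow 3
  have := ((hd_quad n0 n1 n2 x).div hq (pow_ne_zero 3 hd)).deriv
  rw [show (fun t => (n0 + n1*t + n2*t^2) / (d0 + d1*t)^3) = (fun s => n0 + n1*s + n2*s^2) / (fun s => d0 + d1*s)^3 from rfl,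
    this]; simp only [Pi.pow_apply]; push_cast; ring_nf

lemma comb3 (A B C N1 N2 N3 D : ℝ) (h : A*N1 + B*N2 + C*N3 = 0) :
    A*(N1/D) + B*(N2/D) + C*(N3/D) = 0 := by
  have e : A*(N1/D) + B*(N2/D) + C*(N3/D) = (A*N1+B*N2+C*N3)/D := by ring
  rw [e, h, zero_div]

lemma comb2 (B C N2 N3 D : ℝ) (h : B*N2 + C*N3 = 0) :
    B*(N2/D) + C*(N3/D) = 0 := by
  have e : B*(N2/D) + C*(N3/D) = (B*N2+C*N3)/D := by ring
  rw [e, h, zero_div]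

/-- Case 8 of the `(1:-2:1)`-resonance classification: for the system
`ẋ = x(1+ax-hy-kz)`, `ẏ = y(-2+hy+kz)`, `ż = z(1+hy+kz)` (i.e. `b=-h`, `c=-k`, `d=0`,
`e=h`, `f=k`, `g=0`), the surfaces `ℓ₁ = 1-(h/2)y+kz` and `ℓ₂ = 1+ax-ahxy+(ak/2)xz` are
invariant with cofactors `hy+kz` and `ax`, and `φ₁ = x²y ℓ₁ ℓ₂⁻²`, `φ₂ = yz² ℓ₁⁻³` are
first integrals. -/
theorem stmt12 (a h k : ℝ) :
    ∀ x y z : ℝ,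
      ((x*(1 + a*x - h*y - k*z)) * deriv (fun t => 1 - (h/2)*y + k*z) x
        + (y*(-2 + h*y + k*z)) * deriv (fun t => 1 - (h/2)*t + k*z) y
        + (z*(1 + h*y + k*z)) * deriv (fun t => 1 - (h/2)*y + k*t) z
        = (h*y + k*z) * (1 - (h/2)*y + k*z))
      ∧
      ((x*(1 + a*x - h*y - k*z)) * deriv (fun t => 1 + a*t - a*h*t*y + (a*k/2)*t*z) x
        + (y*(-2 + h*y + k*z)) * deriv (fun t => 1 + a*x - a*h*x*t + (a*k/2)*x*z) y
        + (z*(1 + h*y + k*z)) * deriv (fun t => 1 + a*x - a*h*x*y + (a*k/2)*x*t) z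
        = (a*x) * (1 + a*x - a*h*x*y + (a*k/2)*x*z))
      ∧
      (1 + a*x - a*h*x*y + (a*k/2)*x*z ≠ 0 →
        (x*(1 + a*x - h*y - k*z)) *
            deriv (fun t => t^2 * y * (1 - (h/2)*y + k*z)
              / (1 + a*t - a*h*t*y + (a*k/2)*t*z)^2) x
          + (y*(-2 + h*y + k*z)) *
            deriv (fun t => x^2 * t * (1 - (h/2)*t + k*z)
              / (1 + a*x - a*h*x*t + (a*k/2)*x*z)^2) y
          + (z*(1 + h*y + k*z)) *
            deriv (fun t => x^2 * y * (1 - (h/2)*y + k*t)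
              / (1 + a*x - a*h*x*y + (a*k/2)*x*t)^2) z = 0)
      ∧
      (1 - (h/2)*y + k*z ≠ 0 →
        (x*(1 + a*x - h*y - k*z)) *
            deriv (fun t => y * z^2 / (1 - (h/2)*y + k*z)^3) x
          + (y*(-2 + h*y + k*z)) *
            deriv (fun t => t * z^2 / (1 - (h/2)*t + k*z)^3) y
          + (z*(1 + h*y + k*z)) *
            deriv (fun t => y * t^2 / (1 - (h/2)*y + k*t)^3) z = 0) := by
  intro x y z
  refine ⟨?_, ?_, ?_, ?_⟩
  · rw [show (fun t : ℝ => 1 - (h/2)*y + k*z) = (fun t => (1 - (h/2)*y + k*z) + 0*t) from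
        by funext t; ring,
      show (fun t : ℝ => 1 - (h/2)*t + k*z) = (fun t => (1 + k*z) + (-(h/2))*t) from
        by funext t; ring,
      show (fun t : ℝ => 1 - (h/2)*y + k*t) = (fun t => (1 - (h/2)*y) + k*t) from
        by funext t; ring,
      deriv_affine, deriv_affine, deriv_affine]
    ring
  · rw [show (fun t : ℝ => 1 + a*t - a*h*t*y + (a*k/2)*t*z)
          = (fun t => 1 + (a - a*h*y + (a*k/2)*z)*t) from by funext t; ring,
      show (fun t : ℝ => 1 + a*x - a*h*x*t + (a*k/2)*x*z)
          = (fun t => (1 + a*x + (a*k/2)*x*z) + (-(a*h*x))*t) from by funext t; ring,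
      show (fun t : ℝ => 1 + a*x - a*h*x*y + (a*k/2)*x*t)
          = (fun t => (1 + a*x - a*h*x*y) + ((a*k/2)*x)*t) from by funext t; ring,
      deriv_affine, deriv_affine, deriv_affine]
    ring
  · intro hne
    have h1 : (1:ℝ) + (a - a*h*y + (a*k/2)*z)*x ≠ 0 := by
      intro H; exact hne (by linear_combination H)
    have h2 : (1 + a*x + (a*k/2)*x*z) + (-(a*h*x))*y ≠ 0 := by
      intro H; exact hne (by linear_combination H)
    have h3 : (1 + a*x - a*h*x*y) + ((a*k/2)*x)*z ≠ 0 := by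
      intro H; exact hne (by linear_combination H)
    rw [show (fun t : ℝ => t^2 * y * (1 - (h/2)*y + k*z)
            / (1 + a*t - a*h*t*y + (a*k/2)*t*z)^2)
          = (fun t => (0 + 0*t + (y*(1 - (h/2)*y + k*z))*t^2)
            / (1 + (a - a*h*y + (a*k/2)*z)*t)^2) from by funext t; ring_nf,
      show (fun t : ℝ => x^2 * t * (1 - (h/2)*t + k*z)
            / (1 + a*x - a*h*x*t + (a*k/2)*x*z)^2)
          = (fun t => (0 + (x^2*(1 + k*z))*t + (-(x^2*(h/2)))*t^2)
            / ((1 + a*x + (a*k/2)*x*z) + (-(a*h*x))*t)^2) from by funext t; ring_nf,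
      show (fun t : ℝ => x^2 * y * (1 - (h/2)*y + k*t)
            / (1 + a*x - a*h*x*y + (a*k/2)*x*t)^2)
          = (fun t => ((x^2*y*(1 - (h/2)*y)) + (x^2*y*k)*t + 0*t^2)
            / ((1 + a*x - a*h*x*y) + ((a*k/2)*x)*t)^2) from by funext t; ring_nf,
      deriv_quad_div_sq _ _ _ _ _ _ h1, deriv_quad_div_sq _ _ _ _ _ _ h2,
      deriv_quad_div_sq _ _ _ _ _ _ h3,
      show ((1:ℝ) + (a - a*h*y + (a*k/2)*z)*x) = 1 + a*x - a*h*x*y + (a*k/2)*x*z from by ring,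
      show ((1 + a*x + (a*k/2)*x*z) + (-(a*h*x))*y : ℝ) = 1 + a*x - a*h*x*y + (a*k/2)*x*z from
        by ring,
      show ((1 + a*x - a*h*x*y) + ((a*k/2)*x)*z : ℝ) = 1 + a*x - a*h*x*y + (a*k/2)*x*z from
        by ring]
    exact comb3 _ _ _ _ _ _ _ (by ring)
  · intro hne
    have h1 : (1 + k*z) + (-(h/2))*y ≠ 0 := by
      intro H; exact hne (by linear_combination H)
    have h2 : (1 - (h/2)*y) + k*z ≠ 0 := by
      intro H; exact hne (by linear_combination H)
    rw [show (fun t : ℝ => y * z^2 / (1 - (h/2)*y + k*z)^3)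
          = (fun t => (y * z^2 / (1 - (h/2)*y + k*z)^3) + 0*t) from by funext t; ring,
      show (fun t : ℝ => t * z^2 / (1 - (h/2)*t + k*z)^3)
          = (fun t => (0 + (z^2)*t + 0*t^2) / ((1 + k*z) + (-(h/2))*t)^3) from
        by funext t; ring_nf,
      show (fun t : ℝ => y * t^2 / (1 - (h/2)*y + k*t)^3)
          = (fun t => (0 + 0*t + y*t^2) / ((1 - (h/2)*y) + k*t)^3) from by funext t; ring_nf,
      deriv_affine, deriv_quad_div_cube _ _ _ _ _ _ h1, deriv_quad_div_cube _ _ _ _ _ _ h2,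
      show ((1 + k*z) + (-(h/2))*y : ℝ) = 1 - (h/2)*y + k*z from by ring,
      show ((1 - (h/2)*y) + k*z : ℝ) = 1 - (h/2)*y + k*z from by ring,
      mul_zero, zero_add]
    exact comb2 _ _ _ _ _ (by ring)
end

section
/- Consider the system ẋ = x(1+ax-3hy+3kz), ẏ = y(-2-2hy-2kz), ż = z(1+hy+kz) (Case 9 of (1:-2:1)-resonance: b=-3h, c=3k, d=g=0, e=-2h, f=-2k). Then ℓ = ax(1+(k/2)z) - ahxy + (1+hy+kz)² satisfies X(ℓ) = (ax-4hy+2kz)·ℓ, and φ₁ = x²y·ℓ^{-2} and φ₂ = yz² are first integrals of X. -/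
/-!
`ℓ` is a Darboux polynomial of `X` with cofactor `c = ax - 4hy + 2kz`, and the monomial `x²y` is
one with cofactor `2c`. Hence `X(x²y / ℓ²) = (2c·x²y·ℓ - 2·x²y·c·ℓ) / ℓ³ = 0` wherever `ℓ ≠ 0`.
The integral `yz²` is a monomial whose cofactor `-2 - 2hy - 2kz + 2(1 + hy + kz)` vanishes.
-/

noncomputable def lieDeriv (P Q R F : ℝ → ℝ → ℝ → ℝ) (x y z : ℝ) : ℝ :=
  P x y z * deriv (fun t => F t y z) x + Q x y z * deriv (fun t => F x t z) y
    + R x y z * deriv (fun t => F x y t) z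

def PartiallyDifferentiableAt (F : ℝ → ℝ → ℝ → ℝ) (x y z : ℝ) : Prop :=
  DifferentiableAt ℝ (fun t => F t y z) x ∧ DifferentiableAt ℝ (fun t => F x t z) y
    ∧ DifferentiableAt ℝ (fun t => F x y t) z

theorem deriv_div_pow {f g : ℝ → ℝ} {p : ℝ} (n : ℕ) (hf : DifferentiableAt ℝ f p)
    (hg : DifferentiableAt ℝ g p) (hg0 : g p ≠ 0) :
    deriv (fun t => f t / g t ^ n) p = (deriv f p * g p - n * f p * deriv g p) / g p ^ (n + 1) := by
  rw [deriv_fun_div hf (hg.fun_pow n) (pow_ne_zero n hg0), deriv_fun_pow hg]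
  cases n with
  | zero => field_simp; ring
  | succ n => field_simp; push_cast; ring

theorem lieDeriv_div_pow_eq_zero {P Q R M L : ℝ → ℝ → ℝ → ℝ} {x y z c : ℝ} (n : ℕ)
    (hM : PartiallyDifferentiableAt M x y z) (hL : PartiallyDifferentiableAt L x y z)
    (hL0 : L x y z ≠ 0) (hXM : lieDeriv P Q R M x y z = n * c * M x y z)
    (hXL : lieDeriv P Q R L x y z = c * L x y z) :
    lieDeriv P Q R (fun x y z => M x y z / L x y z ^ n) x y z = 0 := by
  obtain ⟨hMx, hMy, hMz⟩ := hM
  obtain ⟨hLx, hLy, hLz⟩ := hL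
  have hquot : lieDeriv P Q R (fun x y z => M x y z / L x y z ^ n) x y z
      = (lieDeriv P Q R M x y z * L x y z - n * M x y z * lieDeriv P Q R L x y z)
          / L x y z ^ (n + 1) := by
    simp only [lieDeriv, deriv_div_pow n hMx hLx hL0, deriv_div_pow n hMy hLy hL0,
      deriv_div_pow n hMz hLz hL0]
    ring
  rw [hquot, hXM, hXL]
  ring

namespace ResonanceCaseNine

def P (a h k : ℝ) : ℝ → ℝ → ℝ → ℝ := fun x y z => x * (1 + a*x - 3*h*y + 3*k*z)

def Q (h k : ℝ) : ℝ → ℝ → ℝ → ℝ := fun _ y z => y * (-2 - 2*h*y - 2*k*z)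

def R (h k : ℝ) : ℝ → ℝ → ℝ → ℝ := fun _ y z => z * (1 + h*y + k*z)

noncomputable def ell (a h k : ℝ) : ℝ → ℝ → ℝ → ℝ := fun x y z =>
  a*x*(1 + (k/2)*z) - a*h*x*y + (1 + h*y + k*z)^2

variable (a h k x y z : ℝ)

theorem partiallyDifferentiableAt_ell :
    PartiallyDifferentiableAt (ell a h k) x y z := by
  refine ⟨?_, ?_, ?_⟩ <;> unfold ell <;> fun_prop

theorem lieDeriv_ell :
    lieDeriv (P a h k) (Q h k) (R h k) (ell a h k) x y z
      = (a*x - 4*h*y + 2*k*z) * ell a h k x y z := by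
  simp (disch := fun_prop) only [lieDeriv, P, Q, R, ell, deriv_fun_add, deriv_fun_sub,
    deriv_fun_mul, deriv_fun_pow, deriv_const_mul_id', deriv_const', deriv_div_const]
  ring

theorem lieDeriv_sq_mul :
    lieDeriv (P a h k) (Q h k) (R h k) (fun x y _ => x^2 * y) x y z
      = 2 * (a*x - 4*h*y + 2*k*z) * (x^2 * y) := by
  simp (disch := fun_prop) only [lieDeriv, P, Q, R, deriv_fun_mul, deriv_fun_pow,
    deriv_const_mul_id', deriv_const', deriv_id'']
  ring

theorem lieDeriv_mul_sq :
    lieDeriv (P a h k) (Q h k) (R h k) (fun _ y z => y * z^2) x y z = 0 := by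
  simp (disch := fun_prop) only [lieDeriv, P, Q, R, deriv_fun_mul, deriv_fun_pow,
    deriv_const', deriv_id'']
  ring

end ResonanceCaseNine

open ResonanceCaseNine in
/-- Case 9 of the `(1:-2:1)`-resonance classification: for the system
`ẋ = x(1+ax-3hy+3kz)`, `ẏ = y(-2-2hy-2kz)`, `ż = z(1+hy+kz)`, the surface
`ℓ = ax(1+(k/2)z) - ahxy + (1+hy+kz)²` is invariant with cofactor `ax-4hy+2kz`, and
`φ₁ = x²y ℓ⁻²`, `φ₂ = yz²` are first integrals. -/
theorem stmt13 (a h k : ℝ) :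
    ∀ x y z : ℝ,
      ((x*(1 + a*x - 3*h*y + 3*k*z)) *
          deriv (fun t => a*t*(1 + (k/2)*z) - a*h*t*y + (1 + h*y + k*z)^2) x
        + (y*(-2 - 2*h*y - 2*k*z)) *
          deriv (fun t => a*x*(1 + (k/2)*z) - a*h*x*t + (1 + h*t + k*z)^2) y
        + (z*(1 + h*y + k*z)) *
          deriv (fun t => a*x*(1 + (k/2)*t) - a*h*x*y + (1 + h*y + k*t)^2) z
        = (a*x - 4*h*y + 2*k*z) *
            (a*x*(1 + (k/2)*z) - a*h*x*y + (1 + h*y + k*z)^2))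
      ∧
      (a*x*(1 + (k/2)*z) - a*h*x*y + (1 + h*y + k*z)^2 ≠ 0 →
        (x*(1 + a*x - 3*h*y + 3*k*z)) *
            deriv (fun t => t^2 * y
              / (a*t*(1 + (k/2)*z) - a*h*t*y + (1 + h*y + k*z)^2)^2) x
          + (y*(-2 - 2*h*y - 2*k*z)) *
            deriv (fun t => x^2 * t
              / (a*x*(1 + (k/2)*z) - a*h*x*t + (1 + h*t + k*z)^2)^2) y
          + (z*(1 + h*y + k*z)) *
            deriv (fun t => x^2 * y
              / (a*x*(1 + (k/2)*t) - a*h*x*y + (1 + h*y + k*t)^2)^2) z = 0)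
      ∧
      ((x*(1 + a*x - 3*h*y + 3*k*z)) * deriv (fun t => y * z^2) x
        + (y*(-2 - 2*h*y - 2*k*z)) * deriv (fun t => t * z^2) y
        + (z*(1 + h*y + k*z)) * deriv (fun t => y * t^2) z = 0) := by
  intro x y z
  refine ⟨lieDeriv_ell a h k x y z, fun hℓ => ?_, lieDeriv_mul_sq a h k x y z⟩
  have hM : PartiallyDifferentiableAt (fun x y _ => x^2 * y) x y z := by
    refine ⟨?_, ?_, ?_⟩ <;> fun_prop
  exact lieDeriv_div_pow_eq_zero 2 hM (partiallyDifferentiableAt_ell a h k x y z) hℓ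
    (by exact_mod_cast lieDeriv_sq_mul a h k x y z) (lieDeriv_ell a h k x y z)
end

section
/- Consider Case 18 of the (1:-2:1)-resonance, where the parameters satisfy 3a-g=0, 3b+h=0, c=0, 3d+2g=0, 3e-2h=0, f=0, i.e. d=-2a, e=-2b, g=3a, h=-3b, c=f=0, so that the system is ẋ = x(1+ax+by), ẏ = y(-2-2ax-2by), ż = z(1+3ax-3by+kz). Then ℓ = (1+ax+by)² + kz(1+(a/2)x-by) satisfies X(ℓ) = (2ax-4by+kz)·ℓ, and φ₁ = x²y and φ₂ = yz²·ℓ^{-2} are first integrals. -/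
set_option maxHeartbeats 2000000 in
/-- Case 18 of the `(1:-2:1)`-resonance classification: for the system
`ẋ = x(1+ax+by)`, `ẏ = y(-2-2ax-2by)`, `ż = z(1+3ax-3by+kz)`, the surface
`ℓ = (1+ax+by)² + kz(1+(a/2)x-by)` is invariant with cofactor `2ax-4by+kz`, and
`φ₁ = x²y`, `φ₂ = yz² ℓ⁻²` are first integrals. -/
theorem stmt14 (a b k : ℝ) :
    ∀ x y z : ℝ,
      ((x*(1 + a*x + b*y)) *
          deriv (fun t => (1 + a*t + b*y)^2 + k*z*(1 + (a/2)*t - b*y)) x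
        + (y*(-2 - 2*a*x - 2*b*y)) *
          deriv (fun t => (1 + a*x + b*t)^2 + k*z*(1 + (a/2)*x - b*t)) y
        + (z*(1 + 3*a*x - 3*b*y + k*z)) *
          deriv (fun t => (1 + a*x + b*y)^2 + k*t*(1 + (a/2)*x - b*y)) z
        = (2*a*x - 4*b*y + k*z) * ((1 + a*x + b*y)^2 + k*z*(1 + (a/2)*x - b*y)))
      ∧
      ((x*(1 + a*x + b*y)) * deriv (fun t => t^2 * y) x
        + (y*(-2 - 2*a*x - 2*b*y)) * deriv (fun t => x^2 * t) y
        + (z*(1 + 3*a*x - 3*b*y + k*z)) * deriv (fun t => x^2 * y) z = 0)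
      ∧
      ((1 + a*x + b*y)^2 + k*z*(1 + (a/2)*x - b*y) ≠ 0 →
        (x*(1 + a*x + b*y)) *
            deriv (fun t => y * z^2 / ((1 + a*t + b*y)^2 + k*z*(1 + (a/2)*t - b*y))^2) x
          + (y*(-2 - 2*a*x - 2*b*y)) *
            deriv (fun t => t * z^2 / ((1 + a*x + b*t)^2 + k*z*(1 + (a/2)*x - b*t))^2) y
          + (z*(1 + 3*a*x - 3*b*y + k*z)) *
            deriv (fun t => y * t^2 / ((1 + a*x + b*y)^2 + k*t*(1 + (a/2)*x - b*y))^2) z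
          = 0) := by
  intro x y z
  have hgx : HasDerivAt (fun t => (1 + a*t + b*y)^2 + k*z*(1 + (a/2)*t - b*y))
      (2*(1 + a*x + b*y)^1*a + k*z*(a/2)) x := by
    have h1 : HasDerivAt (fun t : ℝ => 1 + a*t + b*y) a x := by
      simpa using (((hasDerivAt_id x).const_mul a).const_add 1).add_const (b*y)
    have h2 : HasDerivAt (fun t : ℝ => 1 + (a/2)*t - b*y) (a/2) x := by
      simpa using (((hasDerivAt_id x).const_mul (a/2)).const_add 1).sub_const (b*y)
    exact (h1.pow 2).add (h2.const_mul (k*z))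
  have hgy : HasDerivAt (fun t => (1 + a*x + b*t)^2 + k*z*(1 + (a/2)*x - b*t))
      (2*(1 + a*x + b*y)^1*b + k*z*(-b)) y := by
    have h1 : HasDerivAt (fun t : ℝ => 1 + a*x + b*t) b y := by
      simpa using (((hasDerivAt_id y).const_mul b).const_add (1 + a*x))
    have h2 : HasDerivAt (fun t : ℝ => 1 + (a/2)*x - b*t) (-b) y := by
      simpa using (HasDerivAt.const_sub (1 + (a/2)*x) ((hasDerivAt_id y).const_mul b))
    exact (h1.pow 2).add (h2.const_mul (k*z))
  have hgz : HasDerivAt (fun t => (1 + a*x + b*y)^2 + k*t*(1 + (a/2)*x - b*y))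
      (k*(1 + (a/2)*x - b*y)) z := by
    have h2 : HasDerivAt (fun t : ℝ => k*t*(1 + (a/2)*x - b*y)) (k*(1 + (a/2)*x - b*y)) z := by
      simpa using (((hasDerivAt_id z).const_mul k).mul_const (1 + (a/2)*x - b*y))
    simpa using (HasDerivAt.const_add ((1 + a*x + b*y)^2) h2)
  refine ⟨?_, ?_, ?_⟩
  · rw [hgx.deriv, hgy.deriv, hgz.deriv]; ring
  · have d1 : deriv (fun t : ℝ => t^2 * y) x = 2*x*y := by
      simpa using (((hasDerivAt_id x).pow 2).mul_const y).deriv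
    have d2 : deriv (fun t : ℝ => x^2 * t) y = x^2 := by
      simpa using ((hasDerivAt_id y).const_mul (x^2)).deriv
    have d3 : deriv (fun _ : ℝ => x^2 * y) z = 0 := deriv_const _ _
    rw [d1, d2, d3]; ring
  · intro hL
    set L := (1 + a*x + b*y)^2 + k*z*(1 + (a/2)*x - b*y) with hLdef
    have hL2 : L^2 ≠ 0 := pow_ne_zero _ hL
    have hnx : HasDerivAt (fun t : ℝ => y * z^2 / ((1 + a*t + b*y)^2 + k*z*(1 + (a/2)*t - b*y))^2)
        ((0 * L^2 - (y*z^2) * (2*L^1*(2*(1 + a*x + b*y)^1*a + k*z*(a/2)))) / (L^2)^2) x :=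
      (hasDerivAt_const x (y*z^2)).div (hgx.pow 2) hL2
    have hny : HasDerivAt (fun t : ℝ => t * z^2 / ((1 + a*x + b*t)^2 + k*z*(1 + (a/2)*x - b*t))^2)
        ((1*z^2 * L^2 - (y*z^2) * (2*L^1*(2*(1 + a*x + b*y)^1*b + k*z*(-b)))) / (L^2)^2) y :=
      ((hasDerivAt_id y).mul_const (z^2)).div (hgy.pow 2) hL2
    have hnz : HasDerivAt (fun t : ℝ => y * t^2 / ((1 + a*x + b*y)^2 + k*t*(1 + (a/2)*x - b*y))^2)
        ((y*(2*z^1*1) * L^2 - (y*z^2) * (2*L^1*(k*(1 + (a/2)*x - b*y)))) / (L^2)^2) z :=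
      (((hasDerivAt_id z).pow 2).const_mul y).div (hgz.pow 2) hL2
    have hinv : x*(1+a*x+b*y)*(2*(1 + a*x + b*y)^1*a + k*z*(a/2))
        + y*(-2-2*a*x-2*b*y)*(2*(1 + a*x + b*y)^1*b + k*z*(-b))
        + z*(1+3*a*x-3*b*y+k*z)*(k*(1 + (a/2)*x - b*y))
        = (2*a*x - 4*b*y + k*z)*L := by rw [hLdef]; ring
    rw [hnx.deriv, hny.deriv, hnz.deriv]
    simp only [mul_div_assoc']
    rw [← add_div, ← add_div, div_eq_zero_iff]
    left
    linear_combination (2*y*z^2*L) * hinv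
end

section
/- Let C, D be formal power series in one variable Y with C(0)=1, satisfying the system -2Y·C'(Y) = h·y(Y)·C(Y) and -2Y·D'(Y) + D(Y) = k·C(Y), with k ≠ 0, where y is any fixed analytic function with y(0)=0. Then for every n ≥ 1, the coefficient of Y^n in C·D^{2n-1} is zero. -/
open PowerSeries

lemma deriv_pow_aux (D : PowerSeries ℝ) (m : ℕ) :
    (D ^ (m + 1)).derivativeFun = (m + 1 : ℕ) • (D ^ m * D.derivativeFun) := by
  have h := Derivation.leibniz_pow (PowerSeries.derivative ℝ) (a := D) (m + 1)
  rw [Nat.add_sub_cancel] at h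
  rw [show (PowerSeries.derivative ℝ) (D ^ (m + 1)) = (D ^ (m + 1)).derivativeFun from rfl,
    show (PowerSeries.derivative ℝ) D = D.derivativeFun from rfl,
    smul_eq_mul] at h
  exact h

/-- Key lemma of Case 5 of the `(1:-2:1)` analysis: if the formal power series `C, D`
satisfy `-2Y C' = h y(Y) C` and `-2Y D' + D = k C` with `C(0)=1`, `k ≠ 0`, and `y(0)=0`,
then for every `n ≥ 1` the coefficient of `Y^n` in `C D^{2n-1}` vanishes. -/
theorem stmt16 (h k : ℝ) (hk : k ≠ 0) (C D y : PowerSeries ℝ)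
    (hC0 : constantCoeff C = 1) (hy0 : constantCoeff y = 0)
    (hC : (-2 : ℝ) • (PowerSeries.X * C.derivativeFun) = PowerSeries.C h * y * C)
    (hD : (-2 : ℝ) • (PowerSeries.X * D.derivativeFun) + D = PowerSeries.C k * C) :
    ∀ n : ℕ, 1 ≤ n → coeff n (C * D ^ (2 * n - 1)) = 0 := by
  intro n hn
  obtain ⟨j, rfl⟩ : ∃ j, n = j + 1 := ⟨n - 1, by omega⟩
  set n := j + 1 with hndef
  set m := 2 * n - 1 with hmdef
  have hm1 : m + 1 = 2 * n := by omega
  have hD' : PowerSeries.C (-2) * (PowerSeries.X * D.derivativeFun) + D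
      = PowerSeries.C k * C := by
    rw [← smul_eq_C_mul]; exact hD
  have h1 : PowerSeries.C k * (C * D ^ m)
      = PowerSeries.C (-2) * (PowerSeries.X * (D.derivativeFun * D ^ m)) + D ^ (m + 1) := by
    calc PowerSeries.C k * (C * D ^ m) = (PowerSeries.C k * C) * D ^ m := by ring
      _ = _ := by rw [← hD']; ring
  set c : ℝ := coeff n (PowerSeries.X * (D.derivativeFun * D ^ m)) with hc
  set d : ℝ := coeff n (D ^ (m + 1)) with hd
  have h2 : (D ^ (m + 1)).derivativeFun = (m + 1 : ℕ) • (D ^ m * D.derivativeFun) :=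
    deriv_pow_aux D m
  have h3 : ((m + 1 : ℕ) : ℝ) * c = (n : ℝ) * d := by
    have e1 : c = coeff j (D.derivativeFun * D ^ m) := coeff_succ_X_mul j _
    have e2 : coeff j ((D ^ (m + 1)).derivativeFun) = coeff n (D ^ (m + 1)) * (n : ℝ) := by
      have e := coeff_derivativeFun (D ^ (m + 1)) j
      simp only [hndef, Nat.cast_add, Nat.cast_one] at e ⊢
      exact e
    rw [h2, map_nsmul, nsmul_eq_mul] at e2
    rw [e1, mul_comm D.derivativeFun (D ^ m)]
    rw [e2]; push_cast; ring
  have hne : (n : ℝ) ≠ 0 := by positivity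
  have h5 : c = d / 2 := by
    have hm1' : ((m + 1 : ℕ) : ℝ) = 2 * (n : ℝ) := by rw [hm1]; push_cast; ring
    rw [hm1'] at h3
    have h6 : (n : ℝ) * (2 * c) = (n : ℝ) * d := by linarith
    have := mul_left_cancel₀ hne h6
    linarith
  have h4 := congrArg (coeff n) h1
  simp only [coeff_C_mul, map_add] at h4
  rw [← hc, ← hd, h5] at h4
  have : k * coeff n (C * D ^ m) = 0 := by rw [h4]; ring
  exact (mul_eq_zero.mp this).resolve_left hk
end

section
/- Consider Case 16 of (1:-2:1)-resonance with parameters 3a-g=0, b=0, 2c-k=0, 3d+g=0, e+h=0, f=0, i.e. the system X: ẋ = x(1+ax+cz), ẏ = y(-2-ax+ey), ż = z(1+3ax-ey+2cz). Then ℓ₁ = 1+2ax+2cz+a²x²-2ceyz satisfies X(ℓ₁) = (2ax+2cz)·ℓ₁, the function ℓ₂ = 2a²x²+2cz-ceyz+2ax satisfies X(ℓ₂) = (1+2ax+2cz)·ℓ₂, and φ = xyz·ℓ₁^{-3/2} is a first integral on the region ℓ₁ > 0. -/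
lemma quadHD (p q r x : ℝ) : HasDerivAt (fun t : ℝ => p + q*t + r*t^2) (q + 2*r*x) x := by
  have h := (((hasDerivAt_id x).const_mul q).add ((hasDerivAt_pow 2 x).const_mul r)).const_add p
  have e : (fun t : ℝ => p + q*t + r*t^2) = (fun t : ℝ => p + (q * t + r * t^2)) := by
    funext t; ring
  rw [e]
  exact h.congr_deriv (by norm_num; ring)

lemma quadDeriv (p q r x : ℝ) : deriv (fun t : ℝ => p + q*t + r*t^2) x = q + 2*r*x :=
  (quadHD p q r x).deriv



/-- Case 16 of the `(1:-2:1)`-resonance classification: for the system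
`ẋ = x(1+ax+cz)`, `ẏ = y(-2-ax+ey)`, `ż = z(1+3ax-ey+2cz)`, the surfaces
`ℓ₁ = 1+2ax+2cz+a²x²-2ceyz` and `ℓ₂ = 2a²x²+2cz-ceyz+2ax` satisfy
`X(ℓ₁) = (2ax+2cz)ℓ₁` and `X(ℓ₂) = (1+2ax+2cz)ℓ₂`, and `φ = xyz ℓ₁^{-3/2}` is a first
integral on the region `ℓ₁ > 0`. -/
theorem stmt18 (a c e : ℝ) :
    ∀ x y z : ℝ,
      ((x*(1 + a*x + c*z)) *
          deriv (fun t => 1 + 2*a*t + 2*c*z + a^2*t^2 - 2*c*e*y*z) x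
        + (y*(-2 - a*x + e*y)) *
          deriv (fun t => 1 + 2*a*x + 2*c*z + a^2*x^2 - 2*c*e*t*z) y
        + (z*(1 + 3*a*x - e*y + 2*c*z)) *
          deriv (fun t => 1 + 2*a*x + 2*c*t + a^2*x^2 - 2*c*e*y*t) z
        = (2*a*x + 2*c*z) * (1 + 2*a*x + 2*c*z + a^2*x^2 - 2*c*e*y*z))
      ∧
      ((x*(1 + a*x + c*z)) *
          deriv (fun t => 2*a^2*t^2 + 2*c*z - c*e*y*z + 2*a*t) x
        + (y*(-2 - a*x + e*y)) *
          deriv (fun t => 2*a^2*x^2 + 2*c*z - c*e*t*z + 2*a*x) y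
        + (z*(1 + 3*a*x - e*y + 2*c*z)) *
          deriv (fun t => 2*a^2*x^2 + 2*c*t - c*e*y*t + 2*a*x) z
        = (1 + 2*a*x + 2*c*z) * (2*a^2*x^2 + 2*c*z - c*e*y*z + 2*a*x))
      ∧
      (0 < 1 + 2*a*x + 2*c*z + a^2*x^2 - 2*c*e*y*z →
        (x*(1 + a*x + c*z)) *
            deriv (fun t => t*y*z*(1 + 2*a*t + 2*c*z + a^2*t^2 - 2*c*e*y*z)
              ^ (-(3:ℝ)/2)) x
          + (y*(-2 - a*x + e*y)) *
            deriv (fun t => x*t*z*(1 + 2*a*x + 2*c*z + a^2*x^2 - 2*c*e*t*z)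
              ^ (-(3:ℝ)/2)) y
          + (z*(1 + 3*a*x - e*y + 2*c*z)) *
            deriv (fun t => x*y*t*(1 + 2*a*x + 2*c*t + a^2*x^2 - 2*c*e*y*t)
              ^ (-(3:ℝ)/2)) z = 0) := by
  intro x y z
  refine ⟨?_, ?_, ?_⟩
  · have d1 : deriv (fun t : ℝ => 1 + 2*a*t + 2*c*z + a^2*t^2 - 2*c*e*y*z) x
        = 2*a + 2*(a^2)*x := by
      have e1 : (fun t : ℝ => 1 + 2*a*t + 2*c*z + a^2*t^2 - 2*c*e*y*z)
          = fun t : ℝ => (1 + 2*c*z - 2*c*e*y*z) + (2*a)*t + (a^2)*t^2 := by funext t; ring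
      rw [e1]; exact quadDeriv _ _ _ x
    have d2 : deriv (fun t : ℝ => 1 + 2*a*x + 2*c*z + a^2*x^2 - 2*c*e*t*z) y
        = -(2*c*e*z) + 2*0*y := by
      have e1 : (fun t : ℝ => 1 + 2*a*x + 2*c*z + a^2*x^2 - 2*c*e*t*z)
          = fun t : ℝ => (1 + 2*a*x + 2*c*z + a^2*x^2) + (-(2*c*e*z))*t + 0*t^2 := by
        funext t; ring
      rw [e1]; exact quadDeriv _ _ _ y
    have d3 : deriv (fun t : ℝ => 1 + 2*a*x + 2*c*t + a^2*x^2 - 2*c*e*y*t) z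
        = (2*c - 2*c*e*y) + 2*0*z := by
      have e1 : (fun t : ℝ => 1 + 2*a*x + 2*c*t + a^2*x^2 - 2*c*e*y*t)
          = fun t : ℝ => (1 + 2*a*x + a^2*x^2) + (2*c - 2*c*e*y)*t + 0*t^2 := by
        funext t; ring
      rw [e1]; exact quadDeriv _ _ _ z
    rw [d1, d2, d3]; ring
  · have d1 : deriv (fun t : ℝ => 2*a^2*t^2 + 2*c*z - c*e*y*z + 2*a*t) x
        = 2*a + 2*(2*a^2)*x := by
      have e1 : (fun t : ℝ => 2*a^2*t^2 + 2*c*z - c*e*y*z + 2*a*t)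
          = fun t : ℝ => (2*c*z - c*e*y*z) + (2*a)*t + (2*a^2)*t^2 := by funext t; ring
      rw [e1]; exact quadDeriv _ _ _ x
    have d2 : deriv (fun t : ℝ => 2*a^2*x^2 + 2*c*z - c*e*t*z + 2*a*x) y
        = -(c*e*z) + 2*0*y := by
      have e1 : (fun t : ℝ => 2*a^2*x^2 + 2*c*z - c*e*t*z + 2*a*x)
          = fun t : ℝ => (2*a^2*x^2 + 2*c*z + 2*a*x) + (-(c*e*z))*t + 0*t^2 := by
        funext t; ring
      rw [e1]; exact quadDeriv _ _ _ y
    have d3 : deriv (fun t : ℝ => 2*a^2*x^2 + 2*c*t - c*e*y*t + 2*a*x) z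
        = (2*c - c*e*y) + 2*0*z := by
      have e1 : (fun t : ℝ => 2*a^2*x^2 + 2*c*t - c*e*y*t + 2*a*x)
          = fun t : ℝ => (2*a^2*x^2 + 2*a*x) + (2*c - c*e*y)*t + 0*t^2 := by
        funext t; ring
      rw [e1]; exact quadDeriv _ _ _ z
    rw [d1, d2, d3]; ring
  · intro hpos
    have hne : (1 + 2*a*x + 2*c*z + a^2*x^2 - 2*c*e*y*z) ≠ 0 := ne_of_gt hpos
    -- x-derivative
    have hℓx : HasDerivAt (fun t : ℝ => 1 + 2*a*t + 2*c*z + a^2*t^2 - 2*c*e*y*z)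
        (2*a + 2*(a^2)*x) x := by
      have e1 : (fun t : ℝ => 1 + 2*a*t + 2*c*z + a^2*t^2 - 2*c*e*y*z)
          = fun t : ℝ => (1 + 2*c*z - 2*c*e*y*z) + (2*a)*t + (a^2)*t^2 := by funext t; ring
      rw [e1]; exact quadHD _ _ _ x
    have hℓy : HasDerivAt (fun t : ℝ => 1 + 2*a*x + 2*c*z + a^2*x^2 - 2*c*e*t*z)
        (-(2*c*e*z) + 2*0*y) y := by
      have e1 : (fun t : ℝ => 1 + 2*a*x + 2*c*z + a^2*x^2 - 2*c*e*t*z)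
          = fun t : ℝ => (1 + 2*a*x + 2*c*z + a^2*x^2) + (-(2*c*e*z))*t + 0*t^2 := by
        funext t; ring
      rw [e1]; exact quadHD _ _ _ y
    have hℓz : HasDerivAt (fun t : ℝ => 1 + 2*a*x + 2*c*t + a^2*x^2 - 2*c*e*y*t)
        ((2*c - 2*c*e*y) + 2*0*z) z := by
      have e1 : (fun t : ℝ => 1 + 2*a*x + 2*c*t + a^2*x^2 - 2*c*e*y*t)
          = fun t : ℝ => (1 + 2*a*x + a^2*x^2) + (2*c - 2*c*e*y)*t + 0*t^2 := by
        funext t; ring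
      rw [e1]; exact quadHD _ _ _ z
    have hrx := hℓx.rpow_const (p := -(3:ℝ)/2) (Or.inl hne)
    have hry := hℓy.rpow_const (p := -(3:ℝ)/2) (Or.inl hne)
    have hrz := hℓz.rpow_const (p := -(3:ℝ)/2) (Or.inl hne)
    have dx : deriv (fun t : ℝ => t*y*z*(1 + 2*a*t + 2*c*z + a^2*t^2 - 2*c*e*y*z)
        ^ (-(3:ℝ)/2)) x
        = y*z*(1 * (1 + 2*a*x + 2*c*z + a^2*x^2 - 2*c*e*y*z) ^ (-(3:ℝ)/2) + x * ((2*a + 2*(a^2)*x) * (-(3:ℝ)/2) * (1 + 2*a*x + 2*c*z + a^2*x^2 - 2*c*e*y*z) ^ (-(3:ℝ)/2 - 1))) := by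
      have h := (((hasDerivAt_id x).mul hrx).const_mul (y*z))
      have e1 : (fun t : ℝ => t*y*z*(1 + 2*a*t + 2*c*z + a^2*t^2 - 2*c*e*y*z) ^ (-(3:ℝ)/2))
          = fun t : ℝ => y*z*(t * (1 + 2*a*t + 2*c*z + a^2*t^2 - 2*c*e*y*z) ^ (-(3:ℝ)/2)) := by
        funext t; ring
      rw [e1]; simpa using h.deriv
    have dy : deriv (fun t : ℝ => x*t*z*(1 + 2*a*x + 2*c*z + a^2*x^2 - 2*c*e*t*z)
        ^ (-(3:ℝ)/2)) y
        = x*z*(1 * (1 + 2*a*x + 2*c*z + a^2*x^2 - 2*c*e*y*z) ^ (-(3:ℝ)/2) + y * ((-(2*c*e*z) + 2*0*y) * (-(3:ℝ)/2) * (1 + 2*a*x + 2*c*z + a^2*x^2 - 2*c*e*y*z) ^ (-(3:ℝ)/2 - 1))) := by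
      have h := (((hasDerivAt_id y).mul hry).const_mul (x*z))
      have e1 : (fun t : ℝ => x*t*z*(1 + 2*a*x + 2*c*z + a^2*x^2 - 2*c*e*t*z) ^ (-(3:ℝ)/2))
          = fun t : ℝ => x*z*(t * (1 + 2*a*x + 2*c*z + a^2*x^2 - 2*c*e*t*z) ^ (-(3:ℝ)/2)) := by
        funext t; ring
      rw [e1]; simpa using h.deriv
    have dz : deriv (fun t : ℝ => x*y*t*(1 + 2*a*x + 2*c*t + a^2*x^2 - 2*c*e*y*t)
        ^ (-(3:ℝ)/2)) z
        = x*y*(1 * (1 + 2*a*x + 2*c*z + a^2*x^2 - 2*c*e*y*z) ^ (-(3:ℝ)/2) + z * (((2*c - 2*c*e*y) + 2*0*z) * (-(3:ℝ)/2) * (1 + 2*a*x + 2*c*z + a^2*x^2 - 2*c*e*y*z) ^ (-(3:ℝ)/2 - 1))) := by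
      have h := (((hasDerivAt_id z).mul hrz).const_mul (x*y))
      have e1 : (fun t : ℝ => x*y*t*(1 + 2*a*x + 2*c*t + a^2*x^2 - 2*c*e*y*t) ^ (-(3:ℝ)/2))
          = fun t : ℝ => x*y*(t * (1 + 2*a*x + 2*c*t + a^2*x^2 - 2*c*e*y*t) ^ (-(3:ℝ)/2)) := by
        funext t; ring
      rw [e1]; simpa using h.deriv
    rw [dx, dy, dz]
    have key : (1 + 2*a*x + 2*c*z + a^2*x^2 - 2*c*e*y*z) ^ (-(3:ℝ)/2)
        = (1 + 2*a*x + 2*c*z + a^2*x^2 - 2*c*e*y*z) * (1 + 2*a*x + 2*c*z + a^2*x^2 - 2*c*e*y*z) ^ (-(3:ℝ)/2 - 1) := by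
      rw [Real.rpow_sub hpos, Real.rpow_one]
      rw [mul_div_assoc', mul_div_cancel_left₀ _ hne]
    rw [key]
    ring
end
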